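/- Let μ, γ > 0 and let h : [0,∞) → ℝ be twice continuously differentiable with (1/2)·h''(x) = −μx·h'(x) + γx·h(x) for all x ≥ 0, h(0) > 0, and h(x) → 0 as x → ∞. Then: (i) h(x) > 0 for all x ≥ 0; (ii) h''(0) = 0; (iii) h is Lebesgue integrable on [0,∞); (iv) h'(x) < 0 and h''(x) > 0 for all x > 0. -/

import Mathlib

open Real Filter Set MeasureTheory Topology

/-!
With the integrating factor `e^{μx²}` the equation reads `(h' e^{μx²})' = 2γx h e^{μx²}`, so
`h' e^{μx²}` increases wherever `h ≥ 0`. A minimum principle (`h'' < 0` at a negative interior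
minimum) gives `h ≥ 0`; then `h' ≤ 0`, since otherwise `h` would be increasing and nonnegative on
a half-line while tending to `0`. A zero of `h` would be a double zero, which a backward Gronwall
argument excludes, so `h > 0`, whence `h' < 0` and `h'' > 0`. Finally `h ≤ h''/(2γ)` on `[1, ∞)`,
and `h'' ≥ 0` is integrable there because `h' → 0`.
-/

/-- If `f'' a < 0`, the second-derivative test makes `a` also a local maximum, so `f` is locally
constant and `f'' a = 0`. -/
theorem IsLocalMin.deriv_deriv_nonneg {f : ℝ → ℝ} {a : ℝ} (hmin : IsLocalMin f a)
    (hc : ContinuousAt f a) : 0 ≤ deriv (deriv f) a := by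
  by_contra! hneg
  have hmax : IsLocalMax f a := isLocalMax_of_deriv_deriv_neg hneg hmin.deriv_eq_zero hc
  have hconst : f =ᶠ[𝓝 a] fun _ => f a := (hmin.and hmax).mono fun x hx => le_antisymm hx.2 hx.1
  have hderiv : deriv f =ᶠ[𝓝 a] fun _ => 0 := by
    filter_upwards [hconst.eventuallyEq_nhds] with x hx
    rw [hx.deriv_eq, deriv_const]
  rw [hderiv.deriv_eq, deriv_const] at hneg
  exact hneg.false

theorem exists_isMinOn_Ici_of_tendsto {f : ℝ → ℝ} {a z l : ℝ} (hf : ContinuousOn f (Ici a))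
    (hlim : Tendsto f atTop (𝓝 l)) (hz : a ≤ z) (hfz : f z < l) :
    ∃ x, a ≤ x ∧ IsMinOn f (Ici a) x := by
  obtain ⟨R, hR⟩ := (hlim.eventually (lt_mem_nhds hfz)).exists_forall_of_atTop
  obtain ⟨x, hx, hmin⟩ := isCompact_Icc.exists_isMinOn ⟨z, hz, le_max_left z R⟩
    (hf.mono (Icc_subset_Ici_self : Icc a (max z R) ⊆ Ici a))
  refine ⟨x, hx.1, isMinOn_iff.mpr fun y hy => ?_⟩
  rcases le_or_gt y (max z R) with hyR | hyR
  · exact isMinOn_iff.mp hmin y ⟨hy, hyR⟩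
  · exact (isMinOn_iff.mp hmin z ⟨hz, le_max_left z R⟩).trans (hR y (max_lt_iff.mp hyR).2.le).le

theorem monotoneOn_of_hasDerivAt_nonneg {D : Set ℝ} (hD : Convex ℝ D) {f f' : ℝ → ℝ}
    (hf : ∀ x ∈ D, HasDerivAt f (f' x) x) (hf' : ∀ x ∈ interior D, 0 ≤ f' x) :
    MonotoneOn f D :=
  monotoneOn_of_hasDerivWithinAt_nonneg hD (fun x hx => (hf x hx).continuousAt.continuousWithinAt)
    (fun x hx => (hf x (interior_subset hx)).hasDerivWithinAt) hf'

theorem strictMonoOn_of_hasDerivAt_pos {D : Set ℝ} (hD : Convex ℝ D) {f f' : ℝ → ℝ}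
    (hf : ∀ x ∈ D, HasDerivAt f (f' x) x) (hf' : ∀ x ∈ interior D, 0 < f' x) :
    StrictMonoOn f D :=
  strictMonoOn_of_hasDerivWithinAt_pos hD (fun x hx => (hf x hx).continuousAt.continuousWithinAt)
    (fun x hx => (hf x (interior_subset hx)).hasDerivWithinAt) hf'

structure IsOUSolution (μ γ : ℝ) (h h' h'' : ℝ → ℝ) : Prop where
  hasDerivAt : ∀ x, HasDerivAt h (h' x) x
  hasDerivAt_deriv : ∀ x, HasDerivAt h' (h'' x) x
  ode : ∀ x, 0 ≤ x → h'' x = 2 * x * (γ * h x - μ * h' x)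

namespace IsOUSolution

variable {μ γ : ℝ} {h h' h'' : ℝ → ℝ}

theorem of_contDiff (hh : ContDiff ℝ 2 h)
    (hode : ∀ x, 0 ≤ x → deriv (deriv h) x = 2 * x * (γ * h x - μ * deriv h x)) :
    IsOUSolution μ γ h (deriv h) (deriv (deriv h)) := by
  obtain ⟨hdiff, -, hderiv⟩ := contDiff_succ_iff_deriv.mp (show ContDiff ℝ (1 + 1) h from hh)
  exact ⟨fun x => (hdiff x).hasDerivAt,
    fun x => (hderiv.differentiable one_ne_zero x).hasDerivAt, hode⟩

theorem continuous (hs : IsOUSolution μ γ h h' h'') : Continuous h :=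
  continuous_iff_continuousAt.mpr fun x => (hs.hasDerivAt x).continuousAt

theorem deriv_deriv_eq (hs : IsOUSolution μ γ h h' h'') : deriv (deriv h) = h'' := by
  have hd : deriv h = h' := funext fun x => (hs.hasDerivAt x).deriv
  exact hd ▸ funext fun x => (hs.hasDerivAt_deriv x).deriv

theorem nonneg (hs : IsOUSolution μ γ h h' h'') (hγ : 0 < γ) (h0 : 0 ≤ h 0)
    (hlim : Tendsto h atTop (𝓝 0)) : ∀ x, 0 ≤ x → 0 ≤ h x := by
  intro z hz
  by_contra! hneg
  obtain ⟨x, hx, hmin⟩ := exists_isMinOn_Ici_of_tendsto hs.continuous.continuousOn hlim hz hneg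
  have hhx : h x < 0 := (isMinOn_iff.mp hmin z hz).trans_lt hneg
  have hxpos : 0 < x := hx.lt_of_ne (by rintro rfl; linarith)
  have hloc : IsLocalMin h x := hmin.isLocalMin (Ici_mem_nhds hxpos)
  have h''x : 0 ≤ h'' x := hs.deriv_deriv_eq ▸ hloc.deriv_deriv_nonneg (hs.hasDerivAt x).continuousAt
  rw [hs.ode x hx, hloc.hasDerivAt_eq_zero (hs.hasDerivAt x)] at h''x
  nlinarith [mul_pos hγ hxpos]

theorem hasDerivAt_deriv_mul_exp (hs : IsOUSolution μ γ h h' h'') {x : ℝ} (hx : 0 ≤ x) :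
    HasDerivAt (fun y => h' y * exp (μ * y ^ 2)) (2 * γ * x * h x * exp (μ * x ^ 2)) x := by
  have hexp : HasDerivAt (fun y => exp (μ * y ^ 2)) (exp (μ * x ^ 2) * (μ * (2 * x))) x := by
    simpa using ((hasDerivAt_pow 2 x).const_mul μ).exp
  exact ((hs.hasDerivAt_deriv x).mul hexp).congr_deriv (by rw [hs.ode x hx]; ring)

theorem monotoneOn_deriv_mul_exp (hs : IsOUSolution μ γ h h' h'') (hγ : 0 ≤ γ)
    (hnn : ∀ x, 0 ≤ x → 0 ≤ h x) :
    MonotoneOn (fun y => h' y * exp (μ * y ^ 2)) (Ici 0) := by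
  refine monotoneOn_of_hasDerivAt_nonneg (convex_Ici 0)
    (fun x hx => hs.hasDerivAt_deriv_mul_exp hx) fun x hx => ?_
  rw [interior_Ici] at hx
  have := hnn x (le_of_lt hx)
  have : 0 < x := hx
  positivity

theorem strictMonoOn_deriv_mul_exp (hs : IsOUSolution μ γ h h' h'') (hγ : 0 < γ)
    (hpos : ∀ x, 0 ≤ x → 0 < h x) :
    StrictMonoOn (fun y => h' y * exp (μ * y ^ 2)) (Ici 0) := by
  refine strictMonoOn_of_hasDerivAt_pos (convex_Ici 0)
    (fun x hx => hs.hasDerivAt_deriv_mul_exp hx) fun x hx => ?_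
  rw [interior_Ici] at hx
  have := hpos x (le_of_lt hx)
  have : 0 < x := hx
  positivity

theorem deriv_nonpos (hs : IsOUSolution μ γ h h' h'') (hγ : 0 ≤ γ) (hnn : ∀ x, 0 ≤ x → 0 ≤ h x)
    (hlim : Tendsto h atTop (𝓝 0)) : ∀ x, 0 ≤ x → h' x ≤ 0 := by
  intro x₁ hx₁
  by_contra! hpos
  have hderiv : ∀ y, x₁ ≤ y → 0 < h' y := by
    intro y hy
    have hle := hs.monotoneOn_deriv_mul_exp hγ hnn (mem_Ici.mpr hx₁) (mem_Ici.mpr (hx₁.trans hy)) hy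
    exact pos_of_mul_pos_left ((mul_pos hpos (exp_pos _)).trans_le hle) (exp_pos _).le
  have hmono : StrictMonoOn h (Ici x₁) :=
    strictMonoOn_of_hasDerivAt_pos (convex_Ici x₁) (fun y _ => hs.hasDerivAt y) fun y hy =>
      hderiv y (interior_subset hy)
  have hlt : h x₁ < h (x₁ + 1) := hmono self_mem_Ici (mem_Ici.mpr (by linarith)) (by linarith)
  have hle : h (x₁ + 1) ≤ 0 := by
    refine ge_of_tendsto hlim ?_
    filter_upwards [eventually_ge_atTop (x₁ + 1)] with y hy
    exact hmono.monotoneOn (mem_Ici.mpr (by linarith)) (mem_Ici.mpr (by linarith)) hy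
  linarith [hnn x₁ hx₁]

/-- Backward Gronwall estimate: `(h - h') e^{Cx}` with `C = 1 + 2(μ + γ)x₀` is nondecreasing
on `[0, x₀]`. -/
theorem apply_zero_nonpos_of_eq_zero (hs : IsOUSolution μ γ h h' h'') (hμ : 0 ≤ μ) (hγ : 0 ≤ γ)
    {x₀ : ℝ} (hx₀ : 0 ≤ x₀) (hnn : ∀ x, 0 ≤ x → 0 ≤ h x) (hd : ∀ x, 0 ≤ x → h' x ≤ 0)
    (hzero : h x₀ = 0) (h'zero : h' x₀ = 0) : h 0 ≤ 0 := by
  set C := 1 + 2 * (μ + γ) * x₀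
  have hη : MonotoneOn (fun x => (h x - h' x) * exp (C * x)) (Icc 0 x₀) := by
    refine monotoneOn_of_hasDerivAt_nonneg (convex_Icc 0 x₀)
      (fun x _ => ((hs.hasDerivAt x).fun_sub (hs.hasDerivAt_deriv x)).fun_mul
        ((hasDerivAt_id' x).const_mul C).exp) fun x hx => ?_
    rw [interior_Icc] at hx
    have key : 0 ≤ (1 + 2 * μ * x - C) * h' x + (C - 2 * γ * x) * h x :=
      add_nonneg (mul_nonneg_of_nonpos_of_nonpos (by nlinarith [hx.2]) (hd x hx.1.le))
        (mul_nonneg (by nlinarith [hx.2]) (hnn x hx.1.le))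
    rw [hs.ode x hx.1.le]
    exact (mul_nonneg (exp_pos (C * x)).le key).trans_eq (by ring)
  have := hη ⟨le_rfl, hx₀⟩ ⟨hx₀, le_rfl⟩ hx₀
  simp only [hzero, h'zero, sub_zero, zero_mul, mul_zero, exp_zero, mul_one] at this
  linarith [hd 0 le_rfl]

theorem pos (hs : IsOUSolution μ γ h h' h'') (hμ : 0 ≤ μ) (hγ : 0 ≤ γ) (h0 : 0 < h 0)
    (hnn : ∀ x, 0 ≤ x → 0 ≤ h x) (hd : ∀ x, 0 ≤ x → h' x ≤ 0) : ∀ x, 0 ≤ x → 0 < h x := by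
  intro x₀ hx₀
  by_contra! hle
  have hzero : h x₀ = 0 := le_antisymm hle (hnn x₀ hx₀)
  have hx₀pos : 0 < x₀ := hx₀.lt_of_ne (by rintro rfl; linarith)
  have hmin : IsLocalMin h x₀ :=
    (isMinOn_iff.mpr fun y hy => hzero ▸ hnn y hy).isLocalMin (Ici_mem_nhds hx₀pos)
  linarith [hs.apply_zero_nonpos_of_eq_zero hμ hγ hx₀ hnn hd hzero
    (hmin.hasDerivAt_eq_zero (hs.hasDerivAt x₀))]

theorem deriv_neg (hs : IsOUSolution μ γ h h' h'') (hγ : 0 < γ) (hpos : ∀ x, 0 ≤ x → 0 < h x)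
    (hd : ∀ x, 0 ≤ x → h' x ≤ 0) : ∀ x, 0 ≤ x → h' x < 0 := by
  intro x hx
  have hlt := hs.strictMonoOn_deriv_mul_exp hγ hpos (mem_Ici.mpr hx) (mem_Ici.mpr (by linarith))
    (lt_add_one x)
  have hnext : h' (x + 1) * exp (μ * (x + 1) ^ 2) ≤ 0 :=
    mul_nonpos_of_nonpos_of_nonneg (hd _ (by linarith)) (exp_pos _).le
  exact neg_of_mul_neg_left (hlt.trans_le hnext) (exp_pos _).le

theorem deriv_deriv_pos (hs : IsOUSolution μ γ h h' h'') (hμ : 0 ≤ μ) (hγ : 0 < γ)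
    (hpos : ∀ x, 0 ≤ x → 0 < h x) (hneg : ∀ x, 0 ≤ x → h' x < 0) : ∀ x, 0 < x → 0 < h'' x := by
  intro x hx
  rw [hs.ode x hx.le]
  have := hpos x hx.le
  have := hneg x hx.le
  have : 0 < γ * h x - μ * h' x := by nlinarith
  positivity

theorem tendsto_deriv (hs : IsOUSolution μ γ h h' h'') (hμ : 0 < μ) (hγ : 0 ≤ γ)
    (hnn : ∀ x, 0 ≤ x → 0 ≤ h x) (hd : ∀ x, 0 ≤ x → h' x ≤ 0) :
    Tendsto h' atTop (𝓝 0) := by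
  have hdecay : Tendsto (fun x => h' 0 * exp (-(μ * x ^ 2))) atTop (𝓝 0) := by
    simpa using (tendsto_exp_neg_atTop_nhds_zero.comp
      ((tendsto_pow_atTop two_ne_zero).const_mul_atTop hμ)).const_mul (h' 0)
  refine tendsto_of_tendsto_of_tendsto_of_le_of_le' hdecay tendsto_const_nhds ?_ ?_
  · filter_upwards [eventually_ge_atTop 0] with x hx
    have hle := hs.monotoneOn_deriv_mul_exp hγ hnn self_mem_Ici (mem_Ici.mpr hx) hx
    rw [exp_neg, ← div_eq_mul_inv, div_le_iff₀ (exp_pos _)]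
    simpa using hle
  · filter_upwards [eventually_ge_atTop 0] with x hx
    exact hd x hx

theorem integrableOn_Ici (hs : IsOUSolution μ γ h h' h'') (hμ : 0 ≤ μ) (hγ : 0 < γ)
    (hpos : ∀ x, 0 ≤ x → 0 < h x) (hneg : ∀ x, 0 ≤ x → h' x < 0)
    (hlim : Tendsto h' atTop (𝓝 0)) : IntegrableOn h (Ici 0) := by
  have h''int : IntegrableOn h'' (Ioi 1) :=
    integrableOn_Ioi_deriv_of_nonneg' (fun x _ => hs.hasDerivAt_deriv x)
      (fun x hx => (hs.deriv_deriv_pos hμ hγ hpos hneg x (by linarith [mem_Ioi.mp hx])).le) hlim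
  have hint : IntegrableOn h (Ioi 1) := by
    refine (h''int.div_const (2 * γ)).mono' hs.continuous.aestronglyMeasurable.restrict ?_
    filter_upwards [ae_restrict_mem measurableSet_Ioi] with x hx
    have hx : 1 < x := hx
    rw [norm_of_nonneg (hpos x (by linarith)).le, le_div_iff₀ (by positivity), hs.ode x (by linarith)]
    nlinarith [mul_nonneg (mul_nonneg hγ.le (by linarith : (0:ℝ) ≤ x - 1)) (hpos x (by linarith)).le,
      mul_nonneg (mul_nonneg hμ (by linarith : (0:ℝ) ≤ x)) (neg_nonneg.mpr (hneg x (by linarith)).le)]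
  rw [← Icc_union_Ioi_eq_Ici zero_le_one]
  exact hs.continuous.integrableOn_Icc.union hint

end IsOUSolution

/-- Any twice continuously differentiable solution of
`(1/2)h'' = −μxh' + γxh` on `[0,∞)` with `h(0) > 0` and `h(x) → 0` at infinity
satisfies: (i) `h > 0` on `[0,∞)`; (ii) `h''(0) = 0`; (iii) `h` is Lebesgue
integrable on `[0,∞)`; (iv) `h' < 0` and `h'' > 0` on `(0,∞)`. -/
theorem OU_invariant_density_properties (μ γ : ℝ) (hμ : 0 < μ) (hγ : 0 < γ)
    (h : ℝ → ℝ) (hh : ContDiff ℝ 2 h)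
    (hode : ∀ x ≥ (0:ℝ),
      (1/2) * deriv (deriv h) x = -(μ * x) * deriv h x + γ * x * h x)
    (h0 : 0 < h 0) (hlim : Tendsto h atTop (nhds 0)) :
    (∀ x ≥ (0:ℝ), 0 < h x) ∧
    deriv (deriv h) 0 = 0 ∧
    IntegrableOn h (Set.Ici 0) ∧
    (∀ x > (0:ℝ), deriv h x < 0 ∧ 0 < deriv (deriv h) x) := by
  have hs : IsOUSolution μ γ h (deriv h) (deriv (deriv h)) :=
    .of_contDiff hh fun x hx => by linarith [hode x hx]
  have hnn := hs.nonneg hγ h0.le hlim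
  have hd := hs.deriv_nonpos hγ.le hnn hlim
  have hpos := hs.pos hμ.le hγ.le h0 hnn hd
  have hneg := hs.deriv_neg hγ hpos hd
  refine ⟨hpos, by simpa using hs.ode 0 le_rfl,
    hs.integrableOn_Ici hμ.le hγ hpos hneg (hs.tendsto_deriv hμ hγ.le hnn hd),
    fun x hx => ⟨hneg x hx.le, hs.deriv_deriv_pos hμ.le hγ hpos hneg x hx⟩⟩
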